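/- arXiv:1502.04041 — 3 statements merged into one kernel-verified Lean document; each statement's English description precedes it below -/
import Mathlib

section
/- Let k ≥ 3 and 2 ≤ ℓ ≤ k-1 be integers such that k-ℓ divides k, let n be divisible by 2k, and let L = n/(k-ℓ). Suppose e_1, ..., e_L are the edges of a Hamilton ℓ-cycle on a vertex set V of size n (indexed cyclically in cycle order), and define blocks B_i = e_i \ e_{i+1} (indices mod L), so |B_i| = k-ℓ. Suppose X ⊆ V and, for every i, the parities of |B_i ∩ X| and |B_{i + k/(k-ℓ)} ∩ X| agree. Then |X| is even. -/
/-!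
Read the block parities `|B i ∩ X| mod 2` as a function `ℕ → ZMod 2` of the cyclic index.
The hypothesis makes it periodic with period `m = k/(k-l)`, hence also with period
`L/2 = m · n/(2k)`. So the sum over all `L` blocks, which is `|X| mod 2`, is twice the sum over
half of them and vanishes in `ZMod 2`.
-/

open Finset

theorem Function.Periodic.sum_range_mul {M : Type*} [AddCommMonoid M] {f : ℕ → M} {p : ℕ}
    (h : Function.Periodic f p) (n : ℕ) :
    ∑ i ∈ range (n * p), f i = n • ∑ i ∈ range p, f i := by
  induction n with
  | zero => simp
  | succ n ih =>
    rw [Nat.succ_mul, sum_range_add, ih, succ_nsmul]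
    congr 1
    refine sum_congr rfl fun i _ => ?_
    rw [add_comm]
    exact_mod_cast h.nat_mul n i

theorem Finset.card_eq_sum_card_inter_of_cover {V ι : Type*} [DecidableEq V] [Fintype ι]
    {B : ι → Finset V} (hdisj : ∀ i j, i ≠ j → Disjoint (B i) (B j))
    (hcover : ∀ x, ∃ i, x ∈ B i) (X : Finset V) :
    #X = ∑ i, #(B i ∩ X) := by
  have hX : X = univ.biUnion fun i => B i ∩ X := by
    ext x
    simpa using fun _ => hcover x
  conv_lhs => rw [hX]
  exact card_biUnion fun i _ j _ hij =>
    (hdisj i j hij).mono inter_subset_left inter_subset_left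

theorem Nat.div_eq_two_mul_mul_div_of_dvd {d k n : ℕ} (hdk : d ∣ k) (hkn : 2 * k ∣ n)
    (hpos : 0 < n / d) : ∃ s, n / d = 2 * (s * (k / d)) := by
  obtain ⟨m, rfl⟩ := hdk
  obtain ⟨s, rfl⟩ := hkn
  have hd : 0 < d := Nat.pos_of_ne_zero fun h => by simp [h] at hpos
  refine ⟨s, ?_⟩
  rw [Nat.mul_div_cancel_left _ hd, show 2 * (d * m) * s = d * (2 * (s * m)) by ring,
    Nat.mul_div_cancel_left _ hd]

theorem even_card_of_parity_periodic {V : Type*} [DecidableEq V] {L p : ℕ} (hLpos : 0 < L)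
    (hp : ∃ s, L = 2 * (s * p)) (B : Fin L → Finset V)
    (hdisj : ∀ i j : Fin L, i ≠ j → Disjoint (B i) (B j)) (hcover : ∀ x : V, ∃ i : Fin L, x ∈ B i)
    (X : Finset V)
    (hpar : ∀ i : Fin L, #(B i ∩ X) % 2 = #(B ⟨(i.val + p) % L, Nat.mod_lt _ hLpos⟩ ∩ X) % 2) :
    Even #X := by
  obtain ⟨s, hL⟩ := hp
  set f : ℕ → ZMod 2 := fun i => (#(B ⟨i % L, Nat.mod_lt _ hLpos⟩ ∩ X) : ZMod 2)
  have hf : Function.Periodic f p := fun i => by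
    have h := hpar ⟨i % L, Nat.mod_lt _ hLpos⟩
    simp only [Nat.mod_add_mod] at h
    exact ((ZMod.natCast_eq_natCast_iff' _ _ 2).mpr h).symm
  have hsum : (#X : ZMod 2) = ∑ i ∈ range L, f i := by
    rw [card_eq_sum_card_inter_of_cover hdisj hcover X, ← Fin.sum_univ_eq_sum_range f L]
    push_cast
    refine sum_congr rfl fun i _ => ?_
    simp only [f, Nat.mod_eq_of_lt i.isLt]
  have hf_half : Function.Periodic f (s * p) := by simpa using hf.nat_mul s
  rw [even_iff_two_dvd, ← ZMod.natCast_eq_zero_iff, hsum, hL, hf_half.sum_range_mul]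
  exact CharTwo.two_nsmul _

theorem stmt_1_general {V : Type*} [DecidableEq V] (k l n L : ℕ)
    (hdvd : (k - l) ∣ k)
    (h2k : 2 * k ∣ n) (hL : L = n / (k - l)) (hLpos : 0 < L)
    (B : Fin L → Finset V)
    (hBdisj : ∀ i j : Fin L, i ≠ j → Disjoint (B i) (B j))
    (hBcover : ∀ x : V, ∃ i : Fin L, x ∈ B i)
    (X : Finset V)
    (hpar : ∀ i : Fin L,
      (B i ∩ X).card % 2 = (B ⟨(i.val + k / (k - l)) % L, Nat.mod_lt _ hLpos⟩ ∩ X).card % 2) :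
    Even X.card := by
  have hhalf : ∃ s, L = 2 * (s * (k / (k - l))) := by
    subst hL
    exact Nat.div_eq_two_mul_mul_div_of_dvd hdvd h2k hLpos
  exact even_card_of_parity_periodic hLpos hhalf B hBdisj hBcover X hpar

/-- Let `k ≥ 3`, `2 ≤ l ≤ k-1` with `k - l ∣ k`, let `2k ∣ n` and
`L = n/(k-l)`.  Given the edges `e 0, …, e (L-1)` of a Hamilton `l`-cycle on a vertex set `V`
of size `n` (indexed cyclically), the blocks `B i = e i \ e (i+1)` have size `k - l` and
partition `V`.  If `X ⊆ V` and for every `i` the parities of `|B i ∩ X|` and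
`|B (i + k/(k-l)) ∩ X|` agree, then `|X|` is even. -/
theorem stmt_1 {V : Type*} [Fintype V] [DecidableEq V] (k l n L : ℕ)
    (hk : 3 ≤ k) (hl2 : 2 ≤ l) (hlk : l ≤ k - 1) (hdvd : (k - l) ∣ k)
    (hn : Fintype.card V = n) (h2k : 2 * k ∣ n) (hL : L = n / (k - l)) (hLpos : 0 < L)
    (e : Fin L → Finset V) (B : Fin L → Finset V)
    (hB : ∀ i : Fin L, B i = e i \ e ⟨(i.val + 1) % L, Nat.mod_lt _ hLpos⟩)
    (hBcard : ∀ i : Fin L, (B i).card = k - l)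
    (hBdisj : ∀ i j : Fin L, i ≠ j → Disjoint (B i) (B j))
    (hBcover : ∀ x : V, ∃ i : Fin L, x ∈ B i)
    (X : Finset V)
    (hpar : ∀ i : Fin L,
      (B i ∩ X).card % 2 = (B ⟨(i.val + k / (k - l)) % L, Nat.mod_lt _ hLpos⟩ ∩ X).card % 2) :
    Even X.card :=
  stmt_1_general k l n L hdvd h2k hL hLpos B hBdisj hBcover X hpar
end

section
/- Let k ≥ 3 and 2 ≤ ℓ ≤ k-1 with k-ℓ dividing k, and let n be divisible by 2k. Let V = X ∪ Y with X, Y disjoint, |X| odd, and let G be any ℓ-uniform hypergraph on V. Define the k-graph H on V whose edges are the k-sets e with either |e ∩ X| even and e inducing a clique in G, or |e ∩ X| odd and e inducing an independent set in G. Then H contains no Hamilton ℓ-cycle. -/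
/-- The `i`-th edge of a (potential) `l`-cycle: the interval of `k` consecutive vertices
starting at position `i * (k - l)` in the cyclic order given by `σ`. -/
def cycleEdge {V : Type*} [DecidableEq V] (k l n L : ℕ) (hn : 0 < n) (σ : Fin n ≃ V)
    (i : Fin L) : Finset V :=
  Finset.image (fun j : Fin k => σ ⟨(i.val * (k - l) + j.val) % n, Nat.mod_lt _ hn⟩)
    Finset.univ

/-- `H` contains a Hamilton `l`-cycle: there is a cyclic ordering of all the vertices and a
cyclic sequence of `L` intervals of `k` consecutive vertices (successive intervals starting
`k - l` apart, the one after the last being the first), each an edge of `H` of size `k`,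
each intersecting the subsequent one in exactly `l` vertices, covering every vertex. -/
def ContainsHamiltonCycle {V : Type*} [Fintype V] [DecidableEq V] (k l : ℕ)
    (H : Finset (Finset V)) : Prop :=
  ∃ (L : ℕ) (hL : 0 < L) (hn : 0 < Fintype.card V) (σ : Fin (Fintype.card V) ≃ V),
    Fintype.card V ∣ L * (k - l) ∧
    (∀ i : Fin L, (cycleEdge k l (Fintype.card V) L hn σ i).card = k) ∧
    (∀ i : Fin L, (cycleEdge k l (Fintype.card V) L hn σ i ∩
      cycleEdge k l (Fintype.card V) L hn σ ⟨(i.val + 1) % L, Nat.mod_lt _ hL⟩).card = l) ∧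
    (∀ x : V, ∃ i : Fin L, x ∈ cycleEdge k l (Fintype.card V) L hn σ i) ∧
    (∀ i : Fin L, cycleEdge k l (Fintype.card V) L hn σ i ∈ H)

/-!
Unroll the Hamilton `ℓ`-cycle into windows of `k` consecutive vertices starting at the
positions `i (k - ℓ)`, `i ∈ ℕ`. Consecutive windows are edges of `H` sharing an `ℓ`-set,
which lies in `G` if one of them meets `X` evenly and outside `G` if the other meets `X`
oddly; hence all windows meet `X` with the same parity. Since `k - ℓ ∣ k`, the windows
starting at `0, k, 2k, …` are among them, and as `2k ∣ n` an even number of them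
partitions the vertex set, so `|X|` is even.
-/

open Finset

section Windows

variable {V : Type*} {n : ℕ} (hn : 0 < n) (σ : Fin n ≃ V)

def cyclicVertex (p : ℕ) : V := σ ⟨p % n, Nat.mod_lt _ hn⟩

def window [DecidableEq V] (k p : ℕ) : Finset V :=
  univ.image fun j : Fin k => cyclicVertex hn σ (p + j)

lemma cyclicVertex_congr {p q : ℕ} (h : p ≡ q [MOD n]) :
    cyclicVertex hn σ p = cyclicVertex hn σ q :=
  congrArg σ (Fin.ext h)

lemma cyclicVertex_val (i : Fin n) : cyclicVertex hn σ i = σ i :=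
  congrArg σ (Fin.ext (Nat.mod_eq_of_lt i.isLt))

variable [DecidableEq V]

lemma window_congr (k : ℕ) {p q : ℕ} (h : p ≡ q [MOD n]) :
    window hn σ k p = window hn σ k q := by
  simp only [window, cyclicVertex_congr hn σ (h.add_right _)]

lemma cycleEdge_eq_window (k l L : ℕ) (i : Fin L) :
    cycleEdge k l n L hn σ i = window hn σ k (i * (k - l)) :=
  rfl

lemma card_window_inter {k : ℕ} (hk : k ≤ n) (p : ℕ) (X : Finset V) :
    (window hn σ k p ∩ X).card
      = ∑ j ∈ range k, if cyclicVertex hn σ (p + j) ∈ X then 1 else 0 := by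
  have hinj : Function.Injective fun j : Fin k => cyclicVertex hn σ (p + j) := by
    intro i j hij
    have hmod : p + i ≡ p + j [MOD n] := Fin.ext_iff.1 (σ.injective hij)
    exact Fin.ext (Nat.ModEq.eq_of_lt_of_lt (Nat.ModEq.add_left_cancel' p hmod)
      (i.isLt.trans_le hk) (j.isLt.trans_le hk))
  rw [window, ← filter_mem_eq_inter, filter_image, card_image_of_injective _ hinj,
    card_filter]
  exact Fin.sum_univ_eq_sum_range (fun j => if cyclicVertex hn σ (p + j) ∈ X then 1 else 0) k

end Windows

lemma sum_range_mul_eq_sum_sum {M : Type*} [AddCommMonoid M] (f : ℕ → M) (b k : ℕ) :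
    ∑ p ∈ range (b * k), f p = ∑ q ∈ range b, ∑ j ∈ range k, f (q * k + j) := by
  induction b with
  | zero => simp
  | succ b ih => rw [Nat.succ_mul, sum_range_add, ih, sum_range_succ]

lemma card_eq_sum_card_window_inter {V : Type*} [Fintype V] [DecidableEq V] {n : ℕ}
    (hn : 0 < n) (σ : Fin n ≃ V) (X : Finset V) {b k : ℕ} (hnbk : n = b * k) :
    X.card = ∑ q ∈ range b, (window hn σ k (q * k) ∩ X).card := by
  have hk : k ≤ n := by
    rcases b with _ | b
    · omega
    · rw [hnbk, Nat.succ_mul]; omega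
  calc X.card = ∑ v, if v ∈ X then 1 else 0 := by
        rw [sum_boole, filter_mem_eq_inter, univ_inter, Nat.cast_id]
    _ = ∑ i : Fin n, if σ i ∈ X then 1 else 0 := (σ.sum_comp _).symm
    _ = ∑ p ∈ range n, if cyclicVertex hn σ p ∈ X then 1 else 0 := by
        rw [← Fin.sum_univ_eq_sum_range]; simp only [cyclicVertex_val]
    _ = ∑ q ∈ range b, (window hn σ k (q * k) ∩ X).card := by
        subst hnbk
        rw [sum_range_mul_eq_sum_sum]
        simp only [card_window_inter hn σ hk]

def IsParityEdge {V : Type*} [DecidableEq V] (G : Finset (Finset V)) (X : Finset V) (l : ℕ)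
    (e : Finset V) : Prop :=
  (Even (e ∩ X).card ∧ ∀ g, g ⊆ e → g.card = l → g ∈ G) ∨
    (Odd (e ∩ X).card ∧ ∀ g, g ⊆ e → g.card = l → g ∉ G)

lemma IsParityEdge.card_inter_modEq {V : Type*} [DecidableEq V] {G : Finset (Finset V)}
    {X A B : Finset V} {l : ℕ} (hA : IsParityEdge G X l A) (hB : IsParityEdge G X l B)
    (hAB : (A ∩ B).card = l) : (A ∩ X).card ≡ (B ∩ X).card [MOD 2] := by
  rcases hA with ⟨hA, hAG⟩ | ⟨hA, hAG⟩ <;> rcases hB with ⟨hB, hBG⟩ | ⟨hB, hBG⟩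
  · exact (Nat.even_iff.1 hA).trans (Nat.even_iff.1 hB).symm
  · exact absurd (hAG _ inter_subset_left hAB) (hBG _ inter_subset_right hAB)
  · exact absurd (hBG _ inter_subset_right hAB) (hAG _ inter_subset_left hAB)
  · exact (Nat.odd_iff.1 hA).trans (Nat.odd_iff.1 hB).symm

lemma ContainsHamiltonCycle.exists_window {V : Type*} [Fintype V] [DecidableEq V] {k l : ℕ}
    {H : Finset (Finset V)} (hH : ContainsHamiltonCycle k l H) :
    ∃ (hn : 0 < Fintype.card V) (σ : Fin (Fintype.card V) ≃ V), ∀ i : ℕ,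
      window hn σ k (i * (k - l)) ∈ H ∧
        (window hn σ k (i * (k - l)) ∩ window hn σ k ((i + 1) * (k - l))).card = l := by
  obtain ⟨L, hL, hn, σ, hLn, -, hinter, -, hmem⟩ := hH
  simp only [cycleEdge_eq_window] at hinter hmem
  have hperiodic : ∀ a b, a ≡ b [MOD L] →
      window hn σ k (a * (k - l)) = window hn σ k (b * (k - l)) := fun a b h =>
    window_congr hn σ k ((h.mul_right' (k - l)).of_dvd hLn)
  refine ⟨hn, σ, fun i => ?_⟩
  have hsucc : (i % L + 1) % L ≡ i + 1 [MOD L] :=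
    (Nat.mod_modEq _ L).trans ((Nat.mod_modEq i L).add_right 1)
  rw [hperiodic i (i % L) (Nat.mod_modEq i L).symm, hperiodic (i + 1) _ hsucc.symm]
  exact ⟨hmem ⟨i % L, Nat.mod_lt _ hL⟩, hinter ⟨i % L, Nat.mod_lt _ hL⟩⟩

theorem stmt_2_general {V : Type*} [Fintype V] [DecidableEq V] (k l n : ℕ)
    (hdvd : (k - l) ∣ k)
    (hn : Fintype.card V = n) (h2k : 2 * k ∣ n)
    (X : Finset V) (hodd : Odd X.card)
    (G : Finset (Finset V))
    (H : Finset (Finset V))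
    (hH : ∀ e : Finset V, e ∈ H ↔ (e.card = k ∧
      ((Even (e ∩ X).card ∧ ∀ g, g ⊆ e → g.card = l → g ∈ G) ∨
       (Odd (e ∩ X).card ∧ ∀ g, g ⊆ e → g.card = l → g ∉ G)))) :
    ¬ ContainsHamiltonCycle k l H := by
  intro hcycle
  obtain ⟨hpos, σ, hwindow⟩ := hcycle.exists_window
  have hparity : ∀ e ∈ H, IsParityEdge G X l e := fun e he => ((hH e).1 he).2
  set c : ℕ → ℕ := fun i => (window hpos σ k (i * (k - l)) ∩ X).card
  have hc : ∀ i, c i ≡ c 0 [MOD 2] := by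
    intro i
    induction i with
    | zero => rfl
    | succ i ih =>
      exact ((hparity _ (hwindow i).1).card_inter_modEq
        (hparity _ (hwindow (i + 1)).1) (hwindow i).2).symm.trans ih
  obtain ⟨m, hm⟩ := hdvd
  obtain ⟨s, hs⟩ := h2k
  have heven : X.card ≡ 0 [MOD 2] := calc
    X.card = ∑ q ∈ range (2 * s), c (q * m) := by
      rw [card_eq_sum_card_window_inter hpos σ X (b := 2 * s) (k := k) (by rw [hn, hs]; ring)]
      refine sum_congr rfl fun q _ => ?_
      rw [show q * k = q * m * (k - l) by rw [mul_assoc, mul_comm m, ← hm]]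
    _ ≡ ∑ q ∈ range (2 * s), c 0 [MOD 2] := Nat.ModEq.sum fun q _ => hc _
    _ = 2 * (s * c 0) := by rw [sum_const, card_range, smul_eq_mul, mul_assoc]
    _ ≡ 0 [MOD 2] := Nat.modEq_zero_iff_dvd.2 (dvd_mul_right _ _)
  exact Nat.not_even_iff_odd.2 hodd (Nat.even_iff.2 heven)

/-- Let `k ≥ 3`, `2 ≤ l ≤ k-1` with `k - l ∣ k`, and `2k ∣ n`.  Let
`V = X ∪ Y` with `X, Y` disjoint and `|X|` odd, and let `G` be any `l`-uniform hypergraph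
on `V`.  The `k`-graph `H` whose edges are the `k`-sets `e` with either `|e ∩ X|` even and
`e` inducing a clique in `G`, or `|e ∩ X|` odd and `e` inducing an independent set in `G`,
contains no Hamilton `l`-cycle. -/
theorem stmt_2 {V : Type*} [Fintype V] [DecidableEq V] (k l n : ℕ)
    (hk : 3 ≤ k) (hl2 : 2 ≤ l) (hlk : l ≤ k - 1) (hdvd : (k - l) ∣ k)
    (hn : Fintype.card V = n) (h2k : 2 * k ∣ n)
    (X Y : Finset V) (hXY : Disjoint X Y) (hcover : X ∪ Y = Finset.univ) (hodd : Odd X.card)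
    (G : Finset (Finset V)) (hG : ∀ g ∈ G, g.card = l)
    (H : Finset (Finset V))
    (hH : ∀ e : Finset V, e ∈ H ↔ (e.card = k ∧
      ((Even (e ∩ X).card ∧ ∀ g, g ⊆ e → g.card = l → g ∈ G) ∨
       (Odd (e ∩ X).card ∧ ∀ g, g ⊆ e → g.card = l → g ∉ G)))) :
    ¬ ContainsHamiltonCycle k l H :=
  stmt_2_general k l n hdvd hn h2k X hodd G H hH
end

section
/- Let k ≥ 2, 0 < p < 1, and 0 < ε < p/(2k·k!). Let H be a k-uniform hypergraph on n vertices which is (p,μ)-dense with μ = (p/2)·ε^{2k}, and let X ⊆ V(H) with |X| ≥ ε²n. Then the induced subgraph H[X] contains a loose path of length at least ε³n, provided n is sufficiently large. -/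
/-- `tupleCount H X` is `e(X 0, …, X (k-1))`: the number of `k`-tuples
`(x 0, …, x (k-1)) ∈ X 0 × ⋯ × X (k-1)` with `{x 0, …, x (k-1)}` an edge of `H`. -/
def tupleCount {V : Type*} [DecidableEq V] {k : ℕ} (H : Finset (Finset V))
    (X : Fin k → Finset V) : ℕ :=
  ((Fintype.piFinset X).filter (fun x => Finset.image x Finset.univ ∈ H)).card

/-- `H` is `(p, μ)`-dense: for all `X 0, …, X (k-1) ⊆ V(H)`,
`e(X 0, …, X (k-1)) ≥ p * |X 0| ⋯ |X (k-1)| - μ * n ^ k`. -/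
def IsDense {V : Type*} [Fintype V] [DecidableEq V] (k : ℕ) (H : Finset (Finset V))
    (p μ : ℝ) : Prop :=
  ∀ X : Fin k → Finset V,
    p * ∏ i, ((X i).card : ℝ) - μ * (Fintype.card V : ℝ) ^ k ≤ (tupleCount H X : ℝ)

/-- `IsLoosePath k H W u v m`: `H` contains a loose path of length `m` with vertex set `W`
and endvertex pair `(u, v)`. -/
def IsLoosePath {V : Type*} [DecidableEq V] (k : ℕ) (H : Finset (Finset V))
    (W : Finset V) (u v : V) (m : ℕ) : Prop :=
  ∃ w : ℕ → V,
    ((Finset.range (m * (k - 1) + 1)).image w).card = m * (k - 1) + 1 ∧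
    (Finset.range (m * (k - 1) + 1)).image w = W ∧
    w 0 = u ∧ w (m * (k - 1)) = v ∧
    ∀ i < m, (Finset.range k).image (fun j => w (i * (k - 1) + j)) ∈ H

/-!
Take `S ⊆ X` with `|S| = N = ⌈ε²n⌉`. Density applied to `(S, …, S)` gives at least
`pNᵏ - μnᵏ ≥ (p/2)Nᵏ` ordered edges in `S`, hence at least `(p/2)Nᵏ/k!` edges inside `S`.
Deleting vertices of degree at most `D = M(k-1)N^(k-2)` (with `M = ⌈ε³n⌉`) one by one cannot
destroy all of them, so some `T ⊆ S` spans a nonempty `H[T]` of minimum degree `> D`. Two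
vertices lie in at most `N^(k-2)` common edges of `H[T]`, so from the last vertex `v` of a loose
path with at most `M(k-1)+1` vertices some edge of `H[T]` meets the path only in `v`; extending
greedily gives a loose path of length `M ≥ ε³n`.
-/

open Finset
open scoped Nat

variable {V : Type*} [DecidableEq V]

lemma Finset.exists_image_range_eq_of_mem {s : Finset V} {v : V} (hv : v ∈ s) :
    ∃ a : ℕ → V, a 0 = v ∧ (range #s).image a = s := by
  set t := s.erase v
  let b : ℕ → V := fun i => if h : i < #t then t.equivFin.symm ⟨i, h⟩ else v
  have hb : (range #t).image b = t := by
    ext x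
    simp only [mem_image, mem_range]
    constructor
    · rintro ⟨i, hi, rfl⟩
      simp [b, hi]
    · intro hx
      exact ⟨t.equivFin ⟨x, hx⟩, (t.equivFin ⟨x, hx⟩).2, by simp [b]⟩
  refine ⟨fun | 0 => v | i + 1 => b i, rfl, ?_⟩
  rw [← card_erase_add_one hv, range_add_one', image_insert, map_eq_image, image_image]
  exact (congrArg (insert v) hb).trans (insert_erase hv)

lemma Finset.image_range_add (g : ℕ → V) (a b : ℕ) :
    (range (a + b)).image g = (range a).image g ∪ (range b).image (fun i => g (a + i)) := by
  rw [range_add, image_union, map_eq_image, image_image]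
  rfl

namespace IsLoosePath

variable {k : ℕ} {H : Finset (Finset V)} {W : Finset V} {u v : V} {m : ℕ}

lemma singleton (x : V) : IsLoosePath k H {x} x x 0 :=
  ⟨fun _ => x, by simp, by simp, rfl, rfl, by simp⟩

lemma card_eq (hP : IsLoosePath k H W u v m) : #W = m * (k - 1) + 1 := by
  obtain ⟨w, hcard, rfl, -⟩ := hP
  exact hcard

lemma right_mem (hP : IsLoosePath k H W u v m) : v ∈ W := by
  obtain ⟨w, -, rfl, -, rfl, -⟩ := hP
  exact mem_image_of_mem w (self_mem_range_succ _)

lemma append (hP : IsLoosePath k H W u v m) {e : Finset V} (he : e ∈ H) (hek : #e = k)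
    (heW : e ∩ W = {v}) : ∃ v', IsLoosePath k H (W ∪ e) u v' (m + 1) := by
  obtain ⟨w, hcard, rfl, rfl, rfl, hedges⟩ := hP
  set L := m * (k - 1)
  have hv : w L ∈ e := mem_of_mem_inter_left (heW ▸ mem_singleton_self (w L))
  have hk : 1 ≤ k := hek ▸ card_pos.2 ⟨_, hv⟩
  have hlen : (m + 1) * (k - 1) + 1 = L + k := by rw [add_one_mul]; omega
  obtain ⟨a, ha0, ha⟩ := exists_image_range_eq_of_mem hv
  rw [hek] at ha
  -- `a` lists `e` starting from the old endpoint `w L`, so `w'` agrees with `w` up to `L`.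
  let w' : ℕ → V := fun j => if j < L then w j else a (j - L)
  have hw'_le : ∀ j ≤ L, w' j = w j := by
    intro j hj
    rcases hj.lt_or_eq with hj | rfl
    · simp [w', hj]
    · simp [w', ha0]
  have hw'_add : ∀ j, w' (L + j) = a j := fun j => by simp [w']
  have hw'_edge : (range k).image (fun j => w' (L + j)) = e := by simpa only [hw'_add] using ha
  have himage : (range ((m + 1) * (k - 1) + 1)).image w' = (range (L + 1)).image w ∪ e := by
    have hprefix : (range L).image w' = (range L).image w :=
      image_congr fun j hj => hw'_le j (mem_range.1 hj).le
    rw [hlen, image_range_add, hprefix, hw'_edge, range_add_one, image_insert, insert_union,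
      insert_eq_of_mem (mem_union_right _ hv)]
  refine ⟨w' ((m + 1) * (k - 1)), w', ?_, himage, hw'_le 0 (Nat.zero_le _), rfl, ?_⟩
  · have := card_union_add_card_inter ((range (L + 1)).image w) e
    rw [inter_comm, heW, hcard, hek, card_singleton] at this
    rw [himage, hlen]
    omega
  · intro i hi
    rcases (Nat.lt_succ_iff.1 hi).lt_or_eq with hi | rfl
    · have hiL : i * (k - 1) + (k - 1) ≤ L := by
        rw [← add_one_mul]
        exact Nat.mul_le_mul_right _ hi
      rw [image_congr fun j hj => hw'_le _ (by have := mem_range.1 hj; omega)]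
      exact hedges i hi
    · rwa [hw'_edge]

end IsLoosePath

section Counting

variable {k : ℕ} {H : Finset (Finset V)}

lemma card_filter_image_univ_eq_le (s : Finset (Fin k → V)) {e : Finset V} (he : #e = k) :
    #{x ∈ s | image x univ = e} ≤ k ! := by
  have hsub : {x ∈ s | image x univ = e} ⊆
      (univ : Finset (Fin k ↪ e)).image (fun g i => (g i : V)) := by
    intro x hx
    have himg : image x univ = e := (mem_filter.1 hx).2
    have hinj : Function.Injective x := by
      have := card_image_iff.1 (by rw [himg, he, Finset.card_univ, Fintype.card_fin])
      simpa [Set.injOn_univ] using this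
    refine mem_image.2 ⟨⟨fun i => ⟨x i, himg ▸ mem_image_of_mem x (mem_univ i)⟩,
      fun i j h => hinj (congrArg Subtype.val h)⟩, mem_univ _, rfl⟩
  calc #{x ∈ s | image x univ = e} ≤ #(univ : Finset (Fin k ↪ e)) :=
        (card_le_card hsub).trans card_image_le
    _ = k ! := by
      rw [Finset.card_univ, Fintype.card_embedding_eq, Fintype.card_fin, Fintype.card_coe, he,
        Nat.descFactorial_self]

lemma tupleCount_const_le (hH : ∀ e ∈ H, #e = k) (S : Finset V) :
    tupleCount H (fun _ : Fin k => S) ≤ k ! * #{e ∈ H | e ⊆ S} := by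
  have hmaps : ∀ x ∈ {x ∈ Fintype.piFinset fun _ : Fin k => S | image x univ ∈ H},
      image x univ ∈ {e ∈ H | e ⊆ S} := by
    intro x hx
    simp only [mem_filter, Fintype.mem_piFinset] at hx ⊢
    exact ⟨hx.2, image_subset_iff.2 fun i _ => hx.1 i⟩
  rw [tupleCount, card_eq_sum_card_fiberwise hmaps, mul_comm, ← smul_eq_mul, ← sum_const]
  exact sum_le_sum fun e he => card_filter_image_univ_eq_le _ (hH e (mem_filter.1 he).1)

lemma card_filter_codegree_le (hH : ∀ e ∈ H, #e = k) (T : Finset V) {x y : V} (hxy : x ≠ y) :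
    #{e ∈ H | e ⊆ T ∧ x ∈ e ∧ y ∈ e} ≤ #T ^ (k - 2) := by
  calc #{e ∈ H | e ⊆ T ∧ x ∈ e ∧ y ∈ e} ≤ #(T.powersetCard (k - 2)) := by
        refine card_le_card_of_injOn (fun e => (e.erase x).erase y) (fun e he => ?_)
          fun e he f hf hef => ?_
        · simp only [mem_coe, mem_filter] at he
          obtain ⟨heH, heT, hxe, hye⟩ := he
          rw [mem_coe, mem_powersetCard, card_erase_of_mem (mem_erase.2 ⟨hxy.symm, hye⟩),
            card_erase_of_mem hxe, hH e heH]
          exact ⟨(erase_subset _ _).trans ((erase_subset _ _).trans heT), by omega⟩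
        · simp only [mem_coe, mem_filter] at he hf
          exact erase_injOn' x he.2.2.1 hf.2.2.1
            (erase_injOn' y (mem_erase.2 ⟨hxy.symm, he.2.2.2⟩)
              (mem_erase.2 ⟨hxy.symm, hf.2.2.2⟩) hef)
    _ ≤ #T ^ (k - 2) := by rw [card_powersetCard]; exact Nat.choose_le_pow _ _

end Counting

section Degrees

variable {k : ℕ} {H : Finset (Finset V)}

lemma exists_subset_forall_lt_card_filter_mem (D : ℕ) {S : Finset V}
    (h : #S * D < #{e ∈ H | e ⊆ S}) :
    ∃ T ⊆ S, {e ∈ H | e ⊆ T}.Nonempty ∧ ∀ v ∈ T, D < #{e ∈ H | e ⊆ T ∧ v ∈ e} := by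
  induction S using Finset.strongInduction with
  | H S ih =>
    by_cases hlow : ∃ v ∈ S, #{e ∈ H | e ⊆ S ∧ v ∈ e} ≤ D
    · obtain ⟨v, hv, hdeg⟩ := hlow
      have hsplit : #{e ∈ H | e ⊆ S} ≤ #{e ∈ H | e ⊆ S ∧ v ∈ e} + #{e ∈ H | e ⊆ S.erase v} := by
        refine (card_le_card fun e he => ?_).trans (card_union_le _ _)
        simp only [mem_union, mem_filter, subset_erase] at he ⊢
        tauto
      rw [← card_erase_add_one hv, add_one_mul] at h
      obtain ⟨T, hTS, hT⟩ := ih _ (erase_ssubset hv) (by omega)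
      exact ⟨T, hTS.trans (erase_subset _ _), hT⟩
    · push Not at hlow
      exact ⟨S, Subset.rfl, card_pos.1 (by omega), hlow⟩

lemma exists_mem_inter_eq_singleton {T W : Finset V} {v : V} {C : ℕ} (hv : v ∈ W)
    (hcodeg : ∀ x y, x ≠ y → #{e ∈ H | e ⊆ T ∧ x ∈ e ∧ y ∈ e} ≤ C)
    (hdeg : (#W - 1) * C < #{e ∈ H | e ⊆ T ∧ v ∈ e}) :
    ∃ e ∈ H, e ⊆ T ∧ e ∩ W = {v} := by
  set B := (W.erase v).biUnion fun x => {e ∈ H | e ⊆ T ∧ v ∈ e ∧ x ∈ e}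
  have hB : #B ≤ (#W - 1) * C :=
    calc #B ≤ ∑ x ∈ W.erase v, #{e ∈ H | e ⊆ T ∧ v ∈ e ∧ x ∈ e} := card_biUnion_le
      _ ≤ ∑ _x ∈ W.erase v, C := sum_le_sum fun x hx => hcodeg v x (ne_of_mem_erase hx).symm
      _ = (#W - 1) * C := by rw [sum_const, smul_eq_mul, card_erase_of_mem hv]
  obtain ⟨e, he, heB⟩ := exists_mem_notMem_of_card_lt_card (hB.trans_lt hdeg)
  obtain ⟨heH, heT, hve⟩ := mem_filter.1 he
  refine ⟨e, heH, heT, eq_singleton_iff_unique_mem.2 ⟨mem_inter.2 ⟨hve, hv⟩, fun x hx => ?_⟩⟩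
  by_contra hxv
  exact heB (mem_biUnion.2 ⟨x, mem_erase.2 ⟨hxv, (mem_inter.1 hx).2⟩,
    mem_filter.2 ⟨heH, heT, hve, (mem_inter.1 hx).1⟩⟩)

lemma exists_isLoosePath_of_codegree_le (hH : ∀ e ∈ H, #e = k) {T : Finset V} (hT : T.Nonempty)
    {C M : ℕ} (hcodeg : ∀ x y, x ≠ y → #{e ∈ H | e ⊆ T ∧ x ∈ e ∧ y ∈ e} ≤ C)
    (hdeg : ∀ v ∈ T, M * (k - 1) * C < #{e ∈ H | e ⊆ T ∧ v ∈ e}) :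
    ∃ W u v, W ⊆ T ∧ IsLoosePath k H W u v M := by
  suffices ∀ m ≤ M, ∃ W u v, W ⊆ T ∧ IsLoosePath k H W u v m from this M le_rfl
  intro m hm
  induction m with
  | zero =>
    obtain ⟨x, hx⟩ := hT
    exact ⟨{x}, x, x, singleton_subset_iff.2 hx, .singleton x⟩
  | succ m ih =>
    obtain ⟨W, u, v, hWT, hP⟩ := ih (by omega)
    have hW : (#W - 1) * C ≤ M * (k - 1) * C := by
      rw [hP.card_eq, Nat.add_sub_cancel]
      gcongr
      omega
    obtain ⟨e, he, heT, heW⟩ :=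
      exists_mem_inter_eq_singleton hP.right_mem hcodeg (hW.trans_lt (hdeg v (hWT hP.right_mem)))
    obtain ⟨v', hP'⟩ := hP.append he (hH e he) heW
    exact ⟨W ∪ e, u, v', union_subset hWT heT, hP'⟩

end Degrees

lemma IsDense.le_card_filter_subset [Fintype V] {k : ℕ} {H : Finset (Finset V)} {p μ : ℝ}
    (hd : IsDense k H p μ) (hH : ∀ e ∈ H, #e = k) (S : Finset V) :
    p * (#S : ℝ) ^ k - μ * (Fintype.card V : ℝ) ^ k ≤ k ! * (#{e ∈ H | e ⊆ S} : ℝ) := by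
  have := hd fun _ => S
  rw [prod_const, Finset.card_univ, Fintype.card_fin] at this
  exact this.trans (mod_cast tupleCount_const_le hH S)

lemma factorial_mul_lt_of_lt_div {k N M : ℕ} (hk : 2 ≤ k) {p ε n : ℝ} (hε : 0 < ε)
    (hεp : ε < p / (2 * k * k !)) (hn : k ≤ ε ^ 3 * n) (hN : ε ^ 2 * n ≤ N)
    (hM : M ≤ ε ^ 3 * n + 1) :
    k ! * (N * (M * ↑(k - 1) * N ^ (k - 2)) : ℝ) < p * N ^ k - p / 2 * ε ^ (2 * k) * n ^ k := by
  have hk' : (2 : ℝ) ≤ k := mod_cast hk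
  have hεk : ε * k * k ! < p / 2 := by
    rw [lt_div_iff₀ (by positivity)] at hεp
    linarith
  have hp : 0 < p / 2 := lt_trans (by positivity) hεk
  have hn0 : 0 < n := pos_of_mul_pos_right (by linarith) (by positivity : (0 : ℝ) ≤ ε ^ 3)
  have hN0 : (0 : ℝ) < N := lt_of_lt_of_le (by positivity) hN
  have hsmall : k ! * (M * ↑(k - 1)) < p / 2 * N := by
    rw [Nat.cast_sub (by omega), Nat.cast_one]
    calc (k ! : ℝ) * (M * (k - 1)) ≤ k ! * ((ε ^ 3 * n + 1) * (k - 1)) := by gcongr; linarith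
      _ ≤ k ! * (ε ^ 3 * n * k) := mul_le_mul_of_nonneg_left (by nlinarith) (by positivity)
      _ = (ε * k * k !) * (ε ^ 2 * n) := by ring
      _ < p / 2 * (ε ^ 2 * n) := by gcongr
      _ ≤ p / 2 * N := by gcongr
  have hpow : (N : ℝ) * N ^ (k - 2) = N ^ (k - 1) := by rw [← pow_succ']; congr 1; omega
  have hpow' : (N : ℝ) ^ k = N * N ^ (k - 1) := by rw [← pow_succ']; congr 1; omega
  calc k ! * (N * (M * ↑(k - 1) * N ^ (k - 2)) : ℝ) = k ! * (M * ↑(k - 1)) * N ^ (k - 1) := by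
        rw [← hpow]; ring
    _ < p / 2 * N * N ^ (k - 1) := by gcongr
    _ = p * N ^ k - p / 2 * N ^ k := by rw [hpow']; ring
    _ ≤ p * N ^ k - p / 2 * ε ^ (2 * k) * n ^ k := by
        rw [pow_mul, mul_assoc, ← mul_pow]
        gcongr

theorem stmt_5_general (k : ℕ) (hk : 2 ≤ k) (p ε : ℝ)
    (hε : 0 < ε) (hεu : ε < p / (2 * k * (Nat.factorial k))) :
    ∃ n₀ : ℕ, ∀ (V : Type) (_ : Fintype V) (_ : DecidableEq V) (H : Finset (Finset V)),
      n₀ ≤ Fintype.card V →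
      (∀ e ∈ H, e.card = k) →
      IsDense k H p ((p / 2) * ε ^ (2 * k)) →
      ∀ X : Finset V, ε ^ 2 * (Fintype.card V : ℝ) ≤ (X.card : ℝ) →
        ∃ (W : Finset V) (u v : V) (m : ℕ),
          W ⊆ X ∧ IsLoosePath k H W u v m ∧ ε ^ 3 * (Fintype.card V : ℝ) ≤ (m : ℝ) := by
  -- `n ≥ k / ε³` gives `ε³n ≥ k`, which pays for rounding `M = ⌈ε³n⌉` up.
  refine ⟨⌈k / ε ^ 3⌉₊, fun V _ _ H hn hH hdense X hX => ?_⟩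
  set N := ⌈ε ^ 2 * (Fintype.card V : ℝ)⌉₊
  set M := ⌈ε ^ 3 * (Fintype.card V : ℝ)⌉₊
  obtain ⟨S, hSX, hS⟩ := X.exists_subset_card_eq (Nat.ceil_le.2 hX)
  have hedges : #S * (M * (k - 1) * N ^ (k - 2)) < #{e ∈ H | e ⊆ S} := by
    have hn' : (k : ℝ) ≤ ε ^ 3 * Fintype.card V := by
      rw [← div_le_iff₀' (by positivity)]
      exact Nat.ceil_le.1 hn
    have := (factorial_mul_lt_of_lt_div hk hε hεu hn' (Nat.le_ceil _)
      (Nat.ceil_lt_add_one (by positivity)).le).trans_le (hS ▸ hdense.le_card_filter_subset hH S)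
    rw [hS]
    exact_mod_cast lt_of_mul_lt_mul_left this (Nat.cast_nonneg _)
  obtain ⟨T, hTS, ⟨e, he⟩, hdeg⟩ := exists_subset_forall_lt_card_filter_mem _ hedges
  have hT : T.Nonempty := by
    obtain ⟨heH, heT⟩ := mem_filter.1 he
    exact (card_pos.1 (by rw [hH e heH]; omega)).mono heT
  have hcodeg : ∀ x y, x ≠ y → #{e ∈ H | e ⊆ T ∧ x ∈ e ∧ y ∈ e} ≤ N ^ (k - 2) :=
    fun x y hxy => (card_filter_codegree_le hH T hxy).trans
      (Nat.pow_le_pow_left ((card_le_card hTS).trans_eq hS) _)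
  obtain ⟨W, u, v, hWT, hP⟩ := exists_isLoosePath_of_codegree_le hH hT hcodeg hdeg
  exact ⟨W, u, v, M, hWT.trans (hTS.trans hSX), hP, Nat.le_ceil _⟩

/-- Let `k ≥ 2`, `0 < p < 1` and `0 < ε < p / (2k·k!)`.  If `H` is a
`(p, μ)`-dense `k`-graph on `n` vertices with `μ = (p/2)·ε^(2k)`, `n` sufficiently large,
and `X ⊆ V(H)` has `|X| ≥ ε² n`, then `H[X]` contains a loose path of length at least
`ε³ n`. -/
theorem stmt_5 (k : ℕ) (hk : 2 ≤ k) (p ε : ℝ) (hp : 0 < p) (hp1 : p < 1)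
    (hε : 0 < ε) (hεu : ε < p / (2 * k * (Nat.factorial k))) :
    ∃ n₀ : ℕ, ∀ (V : Type) (_ : Fintype V) (_ : DecidableEq V) (H : Finset (Finset V)),
      n₀ ≤ Fintype.card V →
      (∀ e ∈ H, e.card = k) →
      IsDense k H p ((p / 2) * ε ^ (2 * k)) →
      ∀ X : Finset V, ε ^ 2 * (Fintype.card V : ℝ) ≤ (X.card : ℝ) →
        ∃ (W : Finset V) (u v : V) (m : ℕ),
          W ⊆ X ∧ IsLoosePath k H W u v m ∧ ε ^ 3 * (Fintype.card V : ℝ) ≤ (m : ℝ) :=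
  stmt_5_general k hk p ε hε hεu
end
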